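/- A time-stamping modulo M, tsm : V → ℤ_M, weakly satisfies a linear weighted graph G = (V,E) (in the sense of the forward/backward conditions) if and only if for every edge (u, ◁, α, v) ∈ E one has dtsm+(u,v) ≤ α, where dtsm+ is extended to u > v by dtsm+(u,v) = -dtsm+(v,u). -/
import Mathlib


open Finset

/-- A weighted constraint edge: `ts tgt - ts src ◁ wt` where ◁ is `<` if `strict` else `≤`. -/
structure WEdge where
  src : ℕ
  strict : Bool
  wt : ℤ
  tgt : ℕ
deriving DecidableEq

/-- `ts` satisfies the constraint of edge `e`. -/
def satEdge (ts : ℕ → ℝ) (e : WEdge) : Prop :=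
  if e.strict then ts e.tgt - ts e.src < (e.wt : ℝ) else ts e.tgt - ts e.src ≤ (e.wt : ℝ)

/-- `ts` realizes the linear weighted graph on vertices `{1,…,n}` with edge set `E`:
monotone w.r.t. the linear order and all difference constraints hold. -/
def Realizes (n : ℕ) (E : Finset WEdge) (ts : ℕ → ℝ) : Prop :=
  (∀ u v : ℕ, 1 ≤ u → u ≤ v → v ≤ n → ts u ≤ ts v) ∧ ∀ e ∈ E, satEdge ts e

/-- Integer parts of consecutive time-stamps differ by at least 0 and at most `M - 1`. -/
def SlowlyMonotone (M : ℤ) (n : ℕ) (ts : ℕ → ℝ) : Prop :=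
  ∀ i : ℕ, 1 ≤ i → i < n → 0 ≤ ⌊ts (i + 1)⌋ - ⌊ts i⌋ ∧ ⌊ts (i + 1)⌋ - ⌊ts i⌋ ≤ M - 1

/-- All edges of the graph have endpoints in `{1,…,n}`. -/
def InGraph (n : ℕ) (E : Finset WEdge) : Prop :=
  ∀ e ∈ E, 1 ≤ e.src ∧ e.src ≤ n ∧ 1 ≤ e.tgt ∧ e.tgt ≤ n

/-- `M` weight-bounded: all weights have absolute value at most `M - 1`. -/
def WtBounded (M : ℤ) (E : Finset WEdge) : Prop := ∀ e ∈ E, |e.wt| ≤ M - 1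

/-- `dtsm(u,v) = (tsm v - tsm u) mod M`. -/
def dtsm (M : ℤ) (tsm : ℕ → ℤ) (u v : ℕ) : ℤ := (tsm v - tsm u) % M

/-- `dtsm⁺(u,v)`, for `u ≤ v`: the cumulative sum of consecutive `dtsm`'s, capped at `M`. -/
def dtsmP (M : ℤ) (tsm : ℕ → ℤ) (u v : ℕ) : ℤ :=
  min M (∑ i ∈ Finset.Ico u v, dtsm M tsm i (i + 1))

/-- Antisymmetric extension of `dtsm⁺` to arbitrary pairs. -/
def dtsmE (M : ℤ) (tsm : ℕ → ℤ) (u v : ℕ) : ℤ :=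
  if u ≤ v then dtsmP M tsm u v else - dtsmP M tsm v u

/-- `(u,v)` is `tsm`-big. -/
def TsmBig (M : ℤ) (tsm : ℕ → ℤ) (u v : ℕ) : Prop :=
  ∃ w1 w2 : ℕ, u ≤ w1 ∧ w1 < w2 ∧ w2 ≤ v ∧ M ≤ dtsm M tsm u w1 + dtsm M tsm w1 w2

/-- `tsm` is a time-stamping modulo `M` on vertices `{1,…,n}`. -/
def TSM (M : ℤ) (n : ℕ) (tsm : ℕ → ℤ) : Prop :=
  ∀ v, 1 ≤ v → v ≤ n → 0 ≤ tsm v ∧ tsm v < M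

/-- `tsm` weakly satisfies the graph (forward/backward conditions). -/
def WeaklySat (M : ℤ) (E : Finset WEdge) (tsm : ℕ → ℤ) : Prop :=
  ∀ e ∈ E,
    (e.src ≤ e.tgt → ¬ TsmBig M tsm e.src e.tgt ∧ dtsm M tsm e.src e.tgt ≤ e.wt) ∧
    (e.tgt < e.src → TsmBig M tsm e.tgt e.src ∨ - e.wt ≤ dtsm M tsm e.tgt e.src)

/-- `(u,v) ∈ geqFr`: fractional part of `ts u` must be ≥ that of `ts v`. -/
def geqFr (M : ℤ) (tsm : ℕ → ℤ) (E : Finset WEdge) (u v : ℕ) : Prop :=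
  (∃ e ∈ E, e.src = u ∧ e.tgt = v ∧ dtsmE M tsm u v = e.wt) ∨
  (v + 1 = u ∧ dtsmE M tsm u v = 0)

/-- `(u,v) ∈ gtFr`: fractional part of `ts u` must be > that of `ts v`. -/
def gtFr (M : ℤ) (tsm : ℕ → ℤ) (E : Finset WEdge) (u v : ℕ) : Prop :=
  ∃ e ∈ E, e.strict = true ∧ e.src = u ∧ e.tgt = v ∧ dtsmE M tsm u v = e.wt

open Classical in
/-- Number of `gtFr` edges used by the path `p 0, p 1, …, p k`. -/
noncomputable def gtCount (M : ℤ) (tsm : ℕ → ℤ) (E : Finset WEdge) (k : ℕ) (p : ℕ → ℕ) : ℕ :=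
  ((Finset.range k).filter (fun i => gtFr M tsm E (p i) (p (i + 1)))).card

lemma dtsm_nonneg (M : ℤ) (hM : 1 ≤ M) (tsm : ℕ → ℤ) (u v : ℕ) : 0 ≤ dtsm M tsm u v :=
  Int.emod_nonneg _ (by omega)

lemma dtsm_lt (M : ℤ) (hM : 1 ≤ M) (tsm : ℕ → ℤ) (u v : ℕ) : dtsm M tsm u v < M :=
  Int.emod_lt_of_pos _ (by omega)

lemma tele_sum (tsm : ℕ → ℤ) {u v : ℕ} (h : u ≤ v) :
    ∑ i ∈ Finset.Ico u v, (tsm (i + 1) - tsm i) = tsm v - tsm u := by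
  induction v, h using Nat.le_induction with
  | base => simp
  | succ v hv ih =>
    rw [Finset.sum_Ico_succ_top (by omega), ih]; ring

lemma sum_steps_mod (M : ℤ) (tsm : ℕ → ℤ) {u v : ℕ} (h : u ≤ v) :
    (∑ i ∈ Finset.Ico u v, dtsm M tsm i (i + 1)) % M = dtsm M tsm u v := by
  unfold dtsm
  rw [← Finset.sum_int_mod, tele_sum tsm h]

lemma sum_steps_nonneg (M : ℤ) (hM : 1 ≤ M) (tsm : ℕ → ℤ) (u v : ℕ) :
    0 ≤ ∑ i ∈ Finset.Ico u v, dtsm M tsm i (i + 1) :=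
  Finset.sum_nonneg fun i _ => dtsm_nonneg M hM tsm i (i + 1)

lemma emod_le_self (M : ℤ) (hM : 1 ≤ M) {S : ℤ} (hS : 0 ≤ S) : S % M ≤ S := by
  have h1 := Int.mul_ediv_add_emod S M
  have h2 : 0 ≤ S / M := Int.ediv_nonneg hS (by omega)
  have h3 : 0 ≤ M * (S / M) := mul_nonneg (by omega) h2
  linarith

lemma dtsm_le_sum (M : ℤ) (hM : 1 ≤ M) (tsm : ℕ → ℤ) {u v : ℕ} (h : u ≤ v) :
    dtsm M tsm u v ≤ ∑ i ∈ Finset.Ico u v, dtsm M tsm i (i + 1) := by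
  rw [← sum_steps_mod M tsm h]
  exact emod_le_self M hM (sum_steps_nonneg M hM tsm u v)

lemma sum_eq_dtsm_of_lt (M : ℤ) (hM : 1 ≤ M) (tsm : ℕ → ℤ) {u v : ℕ} (h : u ≤ v)
    (hlt : ∑ i ∈ Finset.Ico u v, dtsm M tsm i (i + 1) < M) :
    ∑ i ∈ Finset.Ico u v, dtsm M tsm i (i + 1) = dtsm M tsm u v := by
  rw [← sum_steps_mod M tsm h]
  exact (Int.emod_eq_of_lt (sum_steps_nonneg M hM tsm u v) hlt).symm

lemma big_iff (M : ℤ) (hM : 1 ≤ M) (tsm : ℕ → ℤ) {u v : ℕ} (h : u ≤ v) :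
    TsmBig M tsm u v ↔ M ≤ ∑ i ∈ Finset.Ico u v, dtsm M tsm i (i + 1) := by
  constructor
  · rintro ⟨w1, w2, h1, h2, h3, h4⟩
    have hw1v : w1 ≤ v := by omega
    have hw2v : w2 ≤ v := h3
    have hsplit1 : (∑ i ∈ Finset.Ico u w1, dtsm M tsm i (i + 1)) +
        ∑ i ∈ Finset.Ico w1 v, dtsm M tsm i (i + 1) =
        ∑ i ∈ Finset.Ico u v, dtsm M tsm i (i + 1) :=
      Finset.sum_Ico_consecutive _ h1 hw1v
    have hsplit2 : (∑ i ∈ Finset.Ico w1 w2, dtsm M tsm i (i + 1)) +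
        ∑ i ∈ Finset.Ico w2 v, dtsm M tsm i (i + 1) =
        ∑ i ∈ Finset.Ico w1 v, dtsm M tsm i (i + 1) :=
      Finset.sum_Ico_consecutive _ (by omega) hw2v
    have b1 := dtsm_le_sum M hM tsm h1
    have b2 := dtsm_le_sum M hM tsm (show w1 ≤ w2 by omega)
    have b3 := sum_steps_nonneg M hM tsm w2 v
    linarith
  · intro hS
    induction v, h using Nat.le_induction with
    | base => simp at hS; omega
    | succ v hv ih =>
      rw [Finset.sum_Ico_succ_top (by omega)] at hS
      by_cases hc : M ≤ ∑ i ∈ Finset.Ico u v, dtsm M tsm i (i + 1)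
      · obtain ⟨w1, w2, h1, h2, h3, h4⟩ := ih hc
        exact ⟨w1, w2, h1, h2, by omega, h4⟩
      · push_neg at hc
        have heq := sum_eq_dtsm_of_lt M hM tsm hv hc
        exact ⟨v, v + 1, hv, by omega, le_refl _, by omega⟩

theorem weaklySat_iff_dtsmE_le (M : ℤ) (hM : 1 ≤ M) (n : ℕ) (E : Finset WEdge)
    (hG : InGraph n E) (hW : WtBounded M E) (tsm : ℕ → ℤ) (hT : TSM M n tsm) :
    WeaklySat M E tsm ↔ ∀ e ∈ E, dtsmE M tsm e.src e.tgt ≤ e.wt := by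
  constructor
  · intro h e he
    obtain ⟨hfwd, hbwd⟩ := h e he
    have hwt := hW e he
    rw [abs_le] at hwt
    by_cases hc : e.src ≤ e.tgt
    · obtain ⟨hnbig, hle⟩ := hfwd hc
      rw [dtsmE, if_pos hc, dtsmP]
      rw [big_iff M hM tsm hc] at hnbig
      push_neg at hnbig
      have heq := sum_eq_dtsm_of_lt M hM tsm hc hnbig
      omega
    · push_neg at hc
      have hvu : e.tgt ≤ e.src := le_of_lt hc
      rw [dtsmE, if_neg (by omega), dtsmP]
      rcases hbwd hc with hbig | hle
      · rw [big_iff M hM tsm hvu] at hbig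
        rw [min_eq_left hbig]
        omega
      · have h1 := dtsm_le_sum M hM tsm hvu
        have h2 := dtsm_lt M hM tsm e.tgt e.src
        omega
  · intro h e he
    have hd := h e he
    have hwt := hW e he
    rw [abs_le] at hwt
    constructor
    · intro hc
      rw [dtsmE, if_pos hc, dtsmP] at hd
      have hlt : ∑ i ∈ Finset.Ico e.src e.tgt, dtsm M tsm i (i + 1) < M := by omega
      have heq := sum_eq_dtsm_of_lt M hM tsm hc hlt
      constructor
      · rw [big_iff M hM tsm hc]; omega
      · omega
    · intro hc
      have hvu : e.tgt ≤ e.src := le_of_lt hc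
      rw [dtsmE, if_neg (by omega), dtsmP] at hd
      by_cases hbig : M ≤ ∑ i ∈ Finset.Ico e.tgt e.src, dtsm M tsm i (i + 1)
      · exact Or.inl ((big_iff M hM tsm hvu).mpr hbig)
      · push_neg at hbig
        have heq := sum_eq_dtsm_of_lt M hM tsm hvu hbig
        right; omega
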